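/- Every 2⊗4 SPPT state is separable: if ρ = X†X with X = [[X₁, SX₁],[0, X₂]] for 4×4 matrices X₁, X₂, S satisfying X₁†S†SX₁ = X₁†SS†X₁, then ρ is separable on ℂ²⊗ℂ⁴. -/

import Mathlib

open Matrix Kronecker Finset ComplexOrder

/-!
Expanding `X†X` gives `ρ = (1 ⊗ X₁)† M(S) (1 ⊗ X₁) + |1⟩⟨1| ⊗ X₂†X₂` with
`M(S) = [[1, S], [S†, S†S]] ≥ 0`, so it suffices to show that `(1 ⊗ X₁)† M(S) (1 ⊗ X₁)` is
separable.

If `X₁` is singular, factor `X₁ = Q R` through its range, of dimension `k ≤ 3`, with `Q = X₁ C`.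
The compression `τ = (1 ⊗ Q)† M(S) (1 ⊗ Q)` is a `2 ⊗ k` state whose partial transpose is the
compression of `M(S†)`: the SPPT condition says exactly that `S†S` and `SS†` have the same
compression to the range of `X₁`. So `τ` is PPT, hence separable by Horodecki's theorem, and so is
its congruence by `1 ⊗ R`.

If `X₁` is invertible, the SPPT condition says that `S` is normal. A common eigenvector `v` of `S`
and `S†` (eigenvalues `μ`, `μ̄`) splits `M(S)` as `[[1, μ], [μ̄, |μ|²]] ⊗ |v⟩⟨v| / ‖v‖²` plus the
compression of `M(S)` by the projection onto `v^⊥`, which is singular and is handled as above.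
-/

/-- 2x2 block matrix with n×n blocks, indexed by `Fin 2 × n`. -/
def blk {n : Type*} (A B C D : Matrix n n ℂ) :
    Matrix (Fin 2 × n) (Fin 2 × n) ℂ := fun p q =>
  if p.1 = 0 then (if q.1 = 0 then A p.2 q.2 else B p.2 q.2)
  else (if q.1 = 0 then C p.2 q.2 else D p.2 q.2)

/-- Partial transpose on the first (qubit) factor. -/
def ptA {n : Type*} (ρ : Matrix (Fin 2 × n) (Fin 2 × n) ℂ) :
    Matrix (Fin 2 × n) (Fin 2 × n) ℂ := fun p q => ρ (q.1, p.2) (p.1, q.2)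

/-- Separability of an (unnormalized) state on ℂ²⊗ℂⁿ. -/
def SepState {n : Type*} [Fintype n] (ρ : Matrix (Fin 2 × n) (Fin 2 × n) ℂ) : Prop :=
  ∃ (N : ℕ) (σ : Fin N → Matrix (Fin 2) (Fin 2) ℂ) (P : Fin N → Matrix n n ℂ),
    (∀ i, (σ i).PosSemidef) ∧ (∀ i, (P i).PosSemidef) ∧ ρ = ∑ i, σ i ⊗ₖ P i

section Blocks

variable {n : Type*}

lemma blk_add (A B C D A' B' C' D' : Matrix n n ℂ) :
    blk A B C D + blk A' B' C' D' = blk (A + A') (B + B') (C + C') (D + D') := by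
  ext ⟨i, a⟩ ⟨j, b⟩
  fin_cases i <;> fin_cases j <;> simp [blk]

lemma blk_conjTranspose (A B C D : Matrix n n ℂ) :
    (blk A B C D)ᴴ = blk Aᴴ Cᴴ Bᴴ Dᴴ := by
  ext ⟨i, a⟩ ⟨j, b⟩
  fin_cases i <;> fin_cases j <;> simp [blk, conjTranspose_apply]

lemma blk_mul [Fintype n] (A B C D A' B' C' D' : Matrix n n ℂ) :
    blk A B C D * blk A' B' C' D' =
      blk (A * A' + B * C') (A * B' + B * D') (C * A' + D * C') (C * B' + D * D') := by
  ext ⟨i, a⟩ ⟨j, b⟩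
  fin_cases i <;> fin_cases j <;>
    simp [blk, mul_apply, Fintype.sum_prod_type, Fin.sum_univ_two]

lemma ptA_blk (A B C D : Matrix n n ℂ) : ptA (blk A B C D) = blk A C B D := by
  ext ⟨i, a⟩ ⟨j, b⟩
  fin_cases i <;> fin_cases j <;> simp [blk, ptA]

lemma kronecker_eq_blk (σ : Matrix (Fin 2) (Fin 2) ℂ) (P : Matrix n n ℂ) :
    σ ⊗ₖ P = blk (σ 0 0 • P) (σ 0 1 • P) (σ 1 0 • P) (σ 1 1 • P) := by
  ext ⟨i, a⟩ ⟨j, b⟩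
  fin_cases i <;> fin_cases j <;> simp [blk, kroneckerMap_apply]

lemma blk_eq_sum_kronecker (A B C D : Matrix n n ℂ) :
    blk A B C D = !![1, 0; 0, 0] ⊗ₖ A + !![0, 1; 0, 0] ⊗ₖ B
      + !![0, 0; 1, 0] ⊗ₖ C + !![0, 0; 0, 1] ⊗ₖ D := by
  ext ⟨i, a⟩ ⟨j, b⟩
  fin_cases i <;> fin_cases j <;> simp [blk, kroneckerMap_apply]

end Blocks

def localConj {m n : Type*} [Fintype m] (B : Matrix m n ℂ)
    (τ : Matrix (Fin 2 × m) (Fin 2 × m) ℂ) : Matrix (Fin 2 × n) (Fin 2 × n) ℂ :=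
  ((1 : Matrix (Fin 2) (Fin 2) ℂ) ⊗ₖ B)ᴴ * τ * ((1 : Matrix (Fin 2) (Fin 2) ℂ) ⊗ₖ B)

section LocalConj

variable {l m n : Type*} [Fintype l] [Fintype m]

lemma localConj_kronecker (B : Matrix m n ℂ) (σ : Matrix (Fin 2) (Fin 2) ℂ) (P : Matrix m m ℂ) :
    localConj B (σ ⊗ₖ P) = σ ⊗ₖ (Bᴴ * P * B) := by
  rw [localConj, conjTranspose_kronecker, conjTranspose_one, ← mul_kronecker_mul,
    ← mul_kronecker_mul, Matrix.one_mul, Matrix.mul_one]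

lemma localConj_add (B : Matrix m n ℂ) (τ τ' : Matrix (Fin 2 × m) (Fin 2 × m) ℂ) :
    localConj B (τ + τ') = localConj B τ + localConj B τ' := by
  simp only [localConj, Matrix.mul_add, Matrix.add_mul]

lemma localConj_blk (B : Matrix m n ℂ) (T₁ T₂ T₃ T₄ : Matrix m m ℂ) :
    localConj B (blk T₁ T₂ T₃ T₄) =
      blk (Bᴴ * T₁ * B) (Bᴴ * T₂ * B) (Bᴴ * T₃ * B) (Bᴴ * T₄ * B) := by
  rw [blk_eq_sum_kronecker, blk_eq_sum_kronecker]
  simp only [localConj_add, localConj_kronecker]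

lemma localConj_localConj (Q : Matrix l m ℂ) (R : Matrix m n ℂ)
    (τ : Matrix (Fin 2 × l) (Fin 2 × l) ℂ) : localConj R (localConj Q τ) = localConj (Q * R) τ := by
  simp only [localConj, ← Matrix.mul_assoc, ← conjTranspose_mul]
  rw [Matrix.mul_assoc _ _ (1 ⊗ₖ R), ← mul_kronecker_mul, Matrix.one_mul]

lemma Matrix.PosSemidef.localConj [Fintype n] {τ : Matrix (Fin 2 × m) (Fin 2 × m) ℂ}
    (hτ : τ.PosSemidef) (B : Matrix m n ℂ) : (localConj B τ).PosSemidef :=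
  hτ.conjTranspose_mul_mul_same _

end LocalConj

section Separable

variable {m n : Type*} [Fintype n]

lemma sepState_kronecker {σ : Matrix (Fin 2) (Fin 2) ℂ} {P : Matrix n n ℂ}
    (hσ : σ.PosSemidef) (hP : P.PosSemidef) : SepState (σ ⊗ₖ P) :=
  ⟨1, fun _ => σ, fun _ => P, fun _ => hσ, fun _ => hP, by simp⟩

lemma SepState.add {ρ ρ' : Matrix (Fin 2 × n) (Fin 2 × n) ℂ}
    (h : SepState ρ) (h' : SepState ρ') : SepState (ρ + ρ') := by
  obtain ⟨N, σ, P, hσ, hP, rfl⟩ := h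
  obtain ⟨N', σ', P', hσ', hP', rfl⟩ := h'
  refine ⟨N + N', Fin.addCases σ σ', Fin.addCases P P', Fin.addCases (by simpa) (by simpa),
    Fin.addCases (by simpa) (by simpa), ?_⟩
  simp [Fin.sum_univ_add]

lemma SepState.localConj [Fintype m] {τ : Matrix (Fin 2 × m) (Fin 2 × m) ℂ} (h : SepState τ)
    (B : Matrix m n ℂ) : SepState (localConj B τ) := by
  obtain ⟨N, σ, P, hσ, hP, rfl⟩ := h
  refine ⟨N, σ, fun i => Bᴴ * P i * B, hσ, fun i => (hP i).conjTranspose_mul_mul_same B, ?_⟩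
  rw [_root_.localConj, Matrix.mul_sum, Matrix.sum_mul]
  exact Finset.sum_congr rfl fun i _ => localConj_kronecker B (σ i) (P i)

end Separable

lemma Matrix.exists_rank_factorization {K m n : Type*} [Field K] [Fintype n]
    (Y : Matrix m n K) :
    ∃ (Q : Matrix m (Fin Y.rank) K) (R : Matrix (Fin Y.rank) n K) (C : Matrix n (Fin Y.rank) K),
      Q * R = Y ∧ Y * C = Q := by
  classical
  let b := Module.finBasis K (LinearMap.range Y.mulVecLin)
  choose c hc using fun j => (b j).2
  have hcol : ∀ a, Y.col a ∈ LinearMap.range Y.mulVecLin := fun a =>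
    ⟨Pi.single a 1, Y.mulVec_single_one a⟩
  refine ⟨of fun i j => (b j : m → K) i, of fun j a => b.repr ⟨Y.col a, hcol a⟩ j,
    of fun a j => c j a, ?_, ?_⟩
  · ext i a
    have := congr_fun (congrArg Subtype.val (b.sum_repr ⟨Y.col a, hcol a⟩)) i
    simp only [Submodule.coe_sum, Submodule.coe_smul, Finset.sum_apply, Pi.smul_apply,
      smul_eq_mul, col_apply, mul_comm] at this
    simp only [mul_apply, of_apply]
    exact this
  · ext i j
    simpa [mul_apply, mulVec, dotProduct] using congr_fun (hc j) i

lemma Matrix.rank_lt_card_of_not_isUnit {K n : Type*} [Field K] [Fintype n] [DecidableEq n]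
    {A : Matrix n n K} (hA : ¬IsUnit A) : A.rank < Fintype.card n := by
  refine (rank_le_card_width A).lt_of_ne fun h => hA ?_
  rw [← mulVec_surjective_iff_isUnit, ← coe_mulVecLin, ← LinearMap.range_eq_top]
  exact Submodule.eq_top_of_finrank_eq (by rw [← rank, h, Module.finrank_fintype_fun_eq_card])

def spptCore {n : Type*} [Fintype n] [DecidableEq n] (S : Matrix n n ℂ) :
    Matrix (Fin 2 × n) (Fin 2 × n) ℂ :=
  blk 1 S Sᴴ (Sᴴ * S)

def PPTImpliesSep (k : ℕ) : Prop :=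
  ∀ τ : Matrix (Fin 2 × Fin k) (Fin 2 × Fin k) ℂ, τ.PosSemidef → (ptA τ).PosSemidef → SepState τ

section SpptCore

variable {m n : Type*} [Fintype n] [DecidableEq n]

lemma spptCore_eq_conjTranspose_mul_self (S : Matrix n n ℂ) :
    spptCore S = (blk 1 S 0 0)ᴴ * blk 1 S 0 0 := by
  simp [spptCore, blk_conjTranspose, blk_mul]

lemma posSemidef_spptCore (S : Matrix n n ℂ) : (spptCore S).PosSemidef := by
  rw [spptCore_eq_conjTranspose_mul_self]
  exact posSemidef_conjTranspose_mul_self _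

lemma ptA_localConj_spptCore {S : Matrix n n ℂ} {Q : Matrix n m ℂ}
    (hQ : Qᴴ * (Sᴴ * S) * Q = Qᴴ * (S * Sᴴ) * Q) :
    ptA (localConj Q (spptCore S)) = localConj Q (spptCore Sᴴ) := by
  simp only [spptCore, localConj_blk, ptA_blk, hQ, conjTranspose_conjTranspose]

lemma sepState_localConj_spptCore [Fintype m] {S : Matrix n n ℂ} {Y : Matrix n m ℂ}
    (hY : Yᴴ * (Sᴴ * S) * Y = Yᴴ * (S * Sᴴ) * Y) (hPPT : PPTImpliesSep Y.rank) :
    SepState (localConj Y (spptCore S)) := by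
  obtain ⟨Q, R, C, hQR, hC⟩ := Y.exists_rank_factorization
  have hQ : Qᴴ * (Sᴴ * S) * Q = Qᴴ * (S * Sᴴ) * Q := by
    simpa only [← hC, conjTranspose_mul, Matrix.mul_assoc] using congr(Cᴴ * $hY * C)
  have hτ : SepState (localConj Q (spptCore S)) :=
    hPPT _ ((posSemidef_spptCore S).localConj Q)
      (ptA_localConj_spptCore hQ ▸ (posSemidef_spptCore Sᴴ).localConj Q)
  rw [← hQR, ← localConj_localConj]
  exact hτ.localConj R

end SpptCore

section Normal

variable {n : Type*} [Fintype n]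

lemma Matrix.conjTranspose_mulVec_eq_zero_of_normal {A : Matrix n n ℂ} (hA : Aᴴ * A = A * Aᴴ)
    {v : n → ℂ} (hv : A *ᵥ v = 0) : Aᴴ *ᵥ v = 0 := by
  refine dotProduct_star_self_eq_zero.mp ?_
  rw [star_mulVec, conjTranspose_conjTranspose, dotProduct_mulVec, vecMul_vecMul, ← hA,
    ← vecMul_vecMul, ← dotProduct_mulVec, ← star_mulVec, hv]
  simp

lemma Matrix.exists_eigenvector_of_normal [DecidableEq n] [Nonempty n] {S : Matrix n n ℂ}
    (hS : Sᴴ * S = S * Sᴴ) :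
    ∃ (μ : ℂ) (v : n → ℂ), v ≠ 0 ∧ S *ᵥ v = μ • v ∧ Sᴴ *ᵥ v = star μ • v := by
  obtain ⟨μ, hμ⟩ := Module.End.exists_eigenvalue S.mulVecLin
  obtain ⟨v, hv⟩ := hμ.exists_hasEigenvector
  have hSv : S *ᵥ v = μ • v := hv.apply_eq_smul
  have hR : (S - μ • 1)ᴴ * (S - μ • 1) = (S - μ • 1) * (S - μ • 1)ᴴ := by
    simp only [conjTranspose_sub, conjTranspose_smul, conjTranspose_one, Matrix.sub_mul,
      Matrix.mul_sub, Matrix.smul_mul, Matrix.mul_smul, Matrix.one_mul, Matrix.mul_one,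
      hS]
    module
  have hRv : (S - μ • 1) *ᵥ v = 0 := by simp [sub_mulVec, smul_mulVec, hSv]
  have := conjTranspose_mulVec_eq_zero_of_normal hR hRv
  simp only [conjTranspose_sub, conjTranspose_smul, conjTranspose_one, sub_mulVec, smul_mulVec,
    one_mulVec, sub_eq_zero] at this
  exact ⟨μ, v, hv.2, hSv, this⟩

end Normal

noncomputable def lineProj {n : Type*} [Fintype n] (v : n → ℂ) : Matrix n n ℂ :=
  (star v ⬝ᵥ v)⁻¹ • vecMulVec v (star v)

section LineProj

variable {n : Type*} [Fintype n] {v : n → ℂ}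

lemma lineProj_conjTranspose (v : n → ℂ) : (lineProj v)ᴴ = lineProj v := by
  rw [lineProj, conjTranspose_smul, conjTranspose_vecMulVec, star_star, star_inv₀,
    ← star_dotProduct]

lemma lineProj_mul_self (hv : v ≠ 0) : lineProj v * lineProj v = lineProj v := by
  have hκ : star v ⬝ᵥ v ≠ 0 := fun h => hv (dotProduct_star_self_eq_zero.mp h)
  rw [lineProj, smul_mul_smul_comm, vecMulVec_mul_vecMulVec, vecMulVec_smul, smul_smul,
    inv_mul_cancel_right₀ hκ]

lemma lineProj_mulVec_self (hv : v ≠ 0) : lineProj v *ᵥ v = v := by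
  have hκ : star v ⬝ᵥ v ≠ 0 := fun h => hv (dotProduct_star_self_eq_zero.mp h)
  rw [lineProj, smul_mulVec, vecMulVec_mulVec, op_smul_eq_smul, smul_smul, inv_mul_cancel₀ hκ,
    one_smul]

lemma mul_lineProj_of_mulVec_eq_smul {S : Matrix n n ℂ} {μ : ℂ} (h : S *ᵥ v = μ • v) :
    S * lineProj v = μ • lineProj v := by
  rw [lineProj, Matrix.mul_smul, mul_vecMulVec, h, smul_vecMulVec, smul_comm]

lemma lineProj_mul_of_conjTranspose_mulVec_eq_smul {S : Matrix n n ℂ} {μ : ℂ}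
    (h : Sᴴ *ᵥ v = star μ • v) : lineProj v * S = μ • lineProj v := by
  have hv : star v ᵥ* S = μ • star v := by
    simpa [star_mulVec, star_smul] using congrArg star h
  rw [lineProj, Matrix.smul_mul, vecMulVec_mul, hv, vecMulVec_smul, smul_comm]

section Splitting

variable {n : Type*} [Fintype n] [DecidableEq n]

lemma eq_smul_add_mul_mul_of_mul_eq_smul {c X : Matrix n n ℂ} {a : ℂ} (hc : c * c = c)
    (hcX : c * X = a • c) (hXc : X * c = a • c) : X = a • c + (1 - c) * X * (1 - c) := by
  simp only [Matrix.sub_mul, Matrix.mul_sub, Matrix.one_mul, Matrix.mul_one, hcX, hXc,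
    Matrix.smul_mul, hc]
  abel

lemma posSemidef_rankOne_fin_two (μ : ℂ) : (!![1, μ; star μ, star μ * μ]).PosSemidef := by
  convert posSemidef_vecMulVec_self_star ![1, star μ] using 1
  ext i j
  fin_cases i <;> fin_cases j <;> simp [vecMulVec_apply]

lemma spptCore_eq_kronecker_add_localConj {S c : Matrix n n ℂ} {μ : ℂ} (hc : cᴴ = c)
    (hcc : c * c = c) (hSc : S * c = μ • c) (hcS : c * S = μ • c) :
    spptCore S = !![1, μ; star μ, star μ * μ] ⊗ₖ c + localConj (1 - c) (spptCore S) := by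
  have hc' : (1 - c)ᴴ = 1 - c := by rw [conjTranspose_sub, conjTranspose_one, hc]
  have hSHc : Sᴴ * c = star μ • c := by
    simpa [conjTranspose_mul, hc] using congrArg conjTranspose hcS
  have hcSH : c * Sᴴ = star μ • c := by
    simpa [conjTranspose_mul, hc] using congrArg conjTranspose hSc
  rw [spptCore, kronecker_eq_blk, localConj_blk, blk_add, hc']
  congr 1
  · exact eq_smul_add_mul_mul_of_mul_eq_smul hcc (by simp) (by simp)
  · exact eq_smul_add_mul_mul_of_mul_eq_smul hcc hcS hSc
  · exact eq_smul_add_mul_mul_of_mul_eq_smul hcc hcSH hSHc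
  · refine eq_smul_add_mul_mul_of_mul_eq_smul (a := star μ * μ) hcc ?_ ?_
    · rw [← Matrix.mul_assoc, hcSH, Matrix.smul_mul, hcS, smul_smul]
    · rw [Matrix.mul_assoc, hSc, Matrix.mul_smul, hSHc, smul_smul, mul_comm]

end Splitting

lemma sepState_spptCore_of_normal {n : Type*} [Fintype n] [DecidableEq n] [Nonempty n]
    {S : Matrix n n ℂ} (hS : Sᴴ * S = S * Sᴴ) (hPPT : ∀ k < Fintype.card n, PPTImpliesSep k) :
    SepState (spptCore S) := by
  obtain ⟨μ, v, hv, hSv, hSHv⟩ := exists_eigenvector_of_normal hS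
  have hc : (lineProj v).PosSemidef := by
    rw [← lineProj_mul_self hv]
    nth_rewrite 1 [← lineProj_conjTranspose v]
    exact posSemidef_conjTranspose_mul_self _
  have hsing : ¬IsUnit (1 - lineProj v) := fun hu => hv <| mulVec_injective_iff_isUnit.mpr hu <|
    by rw [sub_mulVec, one_mulVec, lineProj_mulVec_self hv, sub_self, mulVec_zero]
  rw [spptCore_eq_kronecker_add_localConj (lineProj_conjTranspose v) (lineProj_mul_self hv)
    (mul_lineProj_of_mulVec_eq_smul hSv) (lineProj_mul_of_conjTranspose_mulVec_eq_smul hSHv)]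
  refine (sepState_kronecker (posSemidef_rankOne_fin_two μ) hc).add
    (sepState_localConj_spptCore ?_ (hPPT _ (rank_lt_card_of_not_isUnit hsing)))
  rw [hS]

lemma conjTranspose_blk_mul_blk {n : Type*} [Fintype n] [DecidableEq n]
    (X₁ X₂ S : Matrix n n ℂ) :
    (blk X₁ (S * X₁) 0 X₂)ᴴ * blk X₁ (S * X₁) 0 X₂ =
      localConj X₁ (spptCore S) + !![0, 0; 0, 1] ⊗ₖ (X₂ᴴ * X₂) := by
  rw [blk_conjTranspose, blk_mul, spptCore, localConj_blk, kronecker_eq_blk, blk_add]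
  simp [conjTranspose_mul, Matrix.mul_assoc]

theorem stmt12 (X₁ X₂ S : Matrix (Fin 4) (Fin 4) ℂ)
    (hsppt : X₁ᴴ * Sᴴ * S * X₁ = X₁ᴴ * S * Sᴴ * X₁)
    (horodecki : ∀ k : ℕ, k ≤ 3 →
      ∀ τ : Matrix (Fin 2 × Fin k) (Fin 2 × Fin k) ℂ,
        τ.PosSemidef → (ptA τ).PosSemidef → SepState τ) :
    SepState ((blk X₁ (S * X₁) 0 X₂)ᴴ * blk X₁ (S * X₁) 0 X₂) := by
  have hPPT : ∀ k < Fintype.card (Fin 4), PPTImpliesSep k := fun k hk =>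
    horodecki k (by simpa [Nat.lt_succ_iff] using hk)
  have hsppt' : X₁ᴴ * (Sᴴ * S) * X₁ = X₁ᴴ * (S * Sᴴ) * X₁ := by
    simpa only [Matrix.mul_assoc] using hsppt
  have hE : (!![(0 : ℂ), 0; 0, 1]).PosSemidef := by
    convert posSemidef_vecMulVec_self_star ![(0 : ℂ), 1] using 1
    ext i j
    fin_cases i <;> fin_cases j <;> simp [vecMulVec_apply]
  rw [conjTranspose_blk_mul_blk]
  refine SepState.add ?_ (sepState_kronecker hE (posSemidef_conjTranspose_mul_self X₂))
  by_cases hX : IsUnit X₁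
  · have hS : Sᴴ * S = S * Sᴴ :=
      ((isUnit_conjTranspose X₁).mpr hX).mul_left_cancel (hX.mul_right_cancel hsppt')
    exact (sepState_spptCore_of_normal hS hPPT).localConj X₁
  · exact sepState_localConj_spptCore hsppt' (hPPT _ (rank_lt_card_of_not_isUnit hX))
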